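/- Fix R ∈ {1, …, D} and suppose Assumption 3 holds for R. If R ≥ max_{i∈{1,…,L+1}} ⌈G_i/2⌉, then there exist adapter matrices (ΔW_{Kl}^h, ΔW_{Ql}^h, ΔW_{Vl}^h, ΔW_{Ol}^h) for all h ∈ {1,…,H} and l ∈ {1,…,L}, together with ΔW_{2L} and ΔW_o, each of rank at most R (all other adapters set to zero), and updated bias vectors (b̂_{1l}, b̂_{2l})_{l=1}^{L}, such that for every sequence length N ≥ 1 and every input X ∈ ℝ^{D×N}, the adapted multi-head Transformer network f satisfies f(X) = f̄(X). -/

import Mathlib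

open Matrix Finset

noncomputable section

/-- A singular value decomposition of a square real matrix: `W = U Σ Vᵀ` with
`U, V` orthogonal and singular values in descending order, recorded 0-indexed
(`σ 0` is the paper's `σ_1`) and extended by zero from index `D` on. -/
structure SVD {D : ℕ} (W : Matrix (Fin D) (Fin D) ℝ) where
  U : Matrix (Fin D) (Fin D) ℝ
  V : Matrix (Fin D) (Fin D) ℝ
  σ : ℕ → ℝ
  hU : Uᵀ * U = 1
  hV : Vᵀ * V = 1
  nonneg : ∀ i, 0 ≤ σ i
  anti : ∀ i j, i ≤ j → σ j ≤ σ i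
  tail_zero : ∀ i, D ≤ i → σ i = 0
  decomp : W = U * Matrix.diagonal (fun i : Fin D => σ i) * Vᵀ

/-- `s.trunc r` is the best rank-`r` approximation `α_r(W)` obtained by
truncating the singular value decomposition `s` of `W` to its `r` largest
singular values. -/
def SVD.trunc {D : ℕ} {W : Matrix (Fin D) (Fin D) ℝ} (s : SVD W) (r : ℕ) :
    Matrix (Fin D) (Fin D) ℝ :=
  s.U * Matrix.diagonal (fun i : Fin D => if (i : ℕ) < r then s.σ i else 0) * s.Vᵀ

/-- Column-wise softmax of a matrix. -/
def colSoftmax {m n : ℕ} (A : Matrix (Fin m) (Fin n) ℝ) :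
    Matrix (Fin m) (Fin n) ℝ :=
  Matrix.of fun i j => Real.exp (A i j) / ∑ k, Real.exp (A k j)

/-- Entrywise ReLU on matrices. -/
def reluMat {m n : ℕ} (A : Matrix (Fin m) (Fin n) ℝ) :
    Matrix (Fin m) (Fin n) ℝ :=
  Matrix.of fun i j => max (A i j) 0

/-- `b 1_Nᵀ` : the matrix whose every column is the bias vector `b`. -/
def biasMat {D : ℕ} (N : ℕ) (b : Fin D → ℝ) : Matrix (Fin D) (Fin N) ℝ :=
  Matrix.of fun i _ => b i

/-- The parameters of a multi-head Transformer network of embedding size `D`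
with `H` attention heads: per-block (indexed `1, …, L`) and per-head (indexed
`1, …, H`) attention weights `WO, WV, WK, WQ`, feedforward weights `W1, W2`
and biases `b1, b2`, and the output-layer weight `Wo`. -/
structure TFNParams (D H : ℕ) where
  WO : ℕ → ℕ → Matrix (Fin D) (Fin D) ℝ
  WV : ℕ → ℕ → Matrix (Fin D) (Fin D) ℝ
  WK : ℕ → ℕ → Matrix (Fin D) (Fin D) ℝ
  WQ : ℕ → ℕ → Matrix (Fin D) (Fin D) ℝ
  W1 : ℕ → Matrix (Fin D) (Fin D) ℝ
  W2 : ℕ → Matrix (Fin D) (Fin D) ℝ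
  b1 : ℕ → Fin D → ℝ
  b2 : ℕ → Fin D → ℝ
  Wo : Matrix (Fin D) (Fin D) ℝ

/-- Multi-head self-attention layer of the `l`-th transformer block:
`Attn_l(Z) = Σ_{h=1}^{H} W_{Ol}^h W_{Vl}^h Z · softmax((W_{Kl}^h Z)ᵀ (W_{Ql}^h Z))`. -/
def TFNParams.attn {D H : ℕ} (p : TFNParams D H) (l : ℕ) {N : ℕ}
    (Z : Matrix (Fin D) (Fin N) ℝ) : Matrix (Fin D) (Fin N) ℝ :=
  ∑ h ∈ Finset.Icc 1 H,
    p.WO l h * p.WV l h * Z * colSoftmax ((p.WK l h * Z)ᵀ * (p.WQ l h * Z))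

/-- The `l`-th transformer block:
`Z_l = W_{2l} · ReLU(W_{1l} · Attn_l(Z_{l−1}) + b_{1l} 1_Nᵀ) + b_{2l} 1_Nᵀ`. -/
def TFNParams.block {D H : ℕ} (p : TFNParams D H) (l : ℕ) {N : ℕ}
    (Z : Matrix (Fin D) (Fin N) ℝ) : Matrix (Fin D) (Fin N) ℝ :=
  p.W2 l * reluMat (p.W1 l * p.attn l Z + biasMat N (p.b1 l)) + biasMat N (p.b2 l)

/-- Output `Z_L` of the first `L` transformer blocks (with `Z_0 = X`). -/
def TFNParams.blocks {D H : ℕ} (p : TFNParams D H) {N : ℕ} :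
    ℕ → Matrix (Fin D) (Fin N) ℝ → Matrix (Fin D) (Fin N) ℝ
  | 0, X => X
  | l + 1, X => p.block (l + 1) (p.blocks l X)

/-- The full Transformer network with `L` blocks: `X ↦ softmax(W_o Z_L)`. -/
def TFNParams.forward {D H : ℕ} (p : TFNParams D H) (L : ℕ) {N : ℕ}
    (X : Matrix (Fin D) (Fin N) ℝ) : Matrix (Fin D) (Fin N) ℝ :=
  colSoftmax (p.Wo * p.blocks L X)

/-- The difference matrix whose rank-`r` truncated SVD enters the key–query
part of the non-singularity Assumption 3, for block `l` and head `h`. -/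
def EKQ {D H : ℕ} (pb p : TFNParams D H) (l h : ℕ) :
    Matrix (Fin D) (Fin D) ℝ :=
  if l = 1 then (pb.WK 1 h)ᵀ * pb.WQ 1 h - (p.WK 1 h)ᵀ * p.WQ 1 h
  else
    ((p.W2 (l - 1))ᵀ)⁻¹ * (pb.W2 (l - 1))ᵀ * (pb.WK l h)ᵀ * pb.WQ l h *
        pb.W2 (l - 1) * (p.W2 (l - 1))⁻¹ -
      (p.WK l h)ᵀ * p.WQ l h

/-- The difference matrix whose rank-`r` truncated SVD enters the
value–projection part of the non-singularity Assumption 3, for block `l` and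
head `h`. -/
def EOV {D H : ℕ} (pb p : TFNParams D H) (l h : ℕ) :
    Matrix (Fin D) (Fin D) ℝ :=
  if l = 1 then
    (p.W1 1)⁻¹ * pb.W1 1 * pb.WO 1 h * pb.WV 1 h - p.WO 1 h * p.WV 1 h
  else
    (p.W1 l)⁻¹ * pb.W1 l * pb.WO l h * pb.WV l h * pb.W2 (l - 1) *
        (p.W2 (l - 1))⁻¹ -
      p.WO l h * p.WV l h

/-- The difference matrix for the output layer in Assumption 3. -/
def EO {D H : ℕ} (pb p : TFNParams D H) (L : ℕ) : Matrix (Fin D) (Fin D) ℝ :=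
  pb.Wo * pb.W2 L - p.Wo * p.W2 L

/-- All weight matrices of a (multi-head) Transformer network with `L` blocks
and `H` heads are non-singular. -/
def AllWeightsNS {D H : ℕ} (L : ℕ) (q : TFNParams D H) : Prop :=
  (∀ l ∈ Finset.Icc 1 L, ∀ h ∈ Finset.Icc 1 H,
    (q.WO l h).det ≠ 0 ∧ (q.WV l h).det ≠ 0 ∧ (q.WK l h).det ≠ 0 ∧
      (q.WQ l h).det ≠ 0) ∧
  (∀ l ∈ Finset.Icc 1 L, (q.W1 l).det ≠ 0 ∧ (q.W2 l).det ≠ 0) ∧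
  q.Wo.det ≠ 0

/-- Rank-based functionality gap `G_i` between the target `pb` and frozen `p`
multi-head Transformer networks, for `i ∈ {1, …, L}` (blocks) and `i = L + 1`
(output layer). -/
def Gap {D H : ℕ} (L : ℕ) (pb p : TFNParams D H) (i : ℕ) : ℕ :=
  if i = L + 1 then (pb.Wo * pb.W2 L - p.Wo * p.W2 L).rank
  else if i = 1 then
    max ((Finset.Icc 1 H).sup fun h =>
        ((pb.WK 1 h)ᵀ * pb.WQ 1 h - (p.WK 1 h)ᵀ * p.WQ 1 h).rank)
      ((Finset.Icc 1 H).sup fun h =>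
        (pb.W1 1 * pb.WO 1 h * pb.WV 1 h - p.W1 1 * p.WO 1 h * p.WV 1 h).rank)
  else
    max ((Finset.Icc 1 H).sup fun h =>
        ((pb.W2 (i - 1))ᵀ * (pb.WK i h)ᵀ * pb.WQ i h * pb.W2 (i - 1) -
          (p.W2 (i - 1))ᵀ * (p.WK i h)ᵀ * p.WQ i h * p.W2 (i - 1)).rank)
      ((Finset.Icc 1 H).sup fun h =>
        (pb.W1 i * pb.WO i h * pb.WV i h * pb.W2 (i - 1) -
          p.W1 i * p.WO i h * p.WV i h * p.W2 (i - 1)).rank)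

/-!
Read in the frozen network's coordinates, each target product `W̄_Kᵀ W̄_Q`, `W̄_1 W̄_O W̄_V`,
`W̄_o W̄_{2L}` differs from the frozen one by a matrix `E` of rank at most `2R`. Splitting
`E = α_R(E) + (E - α_R(E))` into two pieces of rank at most `R`, a correction of each factor
realises `E`; the non-singularity assumption keeps the corrected first factor invertible.
With these adapters and the biases transported by `W_{2l} W̄_{2l}⁻¹`, the hidden state after
block `l < L` of the adapted network is `W_{2l} W̄_{2l}⁻¹` times the target's: the softmax only
sees the conjugated key–query products, which agree. The last block and `W_o` then reproduce
the target's output exactly.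
-/

theorem exists₂_imp_of_imp_exists₂ {α β : Type*} [Nonempty α] [Nonempty β] {p : Prop}
    {q : α → β → Prop} (h : p → ∃ a b, q a b) : ∃ a b, p → q a b := by
  by_cases hp : p
  · obtain ⟨a, b, hab⟩ := h hp
    exact ⟨a, b, fun _ => hab⟩
  · exact ⟨Classical.arbitrary α, Classical.arbitrary β, fun h => absurd h hp⟩

namespace Matrix

variable {K n : Type*} [Field K] [Fintype n] [DecidableEq n]

theorem rank_mul_diagonal_mul_le [DecidableEq K] (U V : Matrix n n K) (d : n → K) :
    (U * diagonal d * V).rank ≤ Fintype.card {i // d i ≠ 0} :=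
  (rank_mul_le_left _ _).trans ((rank_mul_le_right _ _).trans (rank_diagonal d).le)

theorem exists_add_mul_add_eq {A B E T : Matrix n n K} {R : ℕ} (hB : B.det ≠ 0)
    (hABT : (A * B + T).det ≠ 0) (hT : T.rank ≤ R) (hET : (E - T).rank ≤ R) :
    ∃ dA dB : Matrix n n K, dA.rank ≤ R ∧ dB.rank ≤ R ∧
      (A + dA) * (B + dB) = A * B + E ∧ (A + dA).det ≠ 0 := by
  have hA' : (A + T * B⁻¹) * B = A * B + T := by
    rw [add_mul, nonsing_inv_mul_cancel_right B T (isUnit_iff_ne_zero.2 hB)]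
  have hA'det : (A + T * B⁻¹).det ≠ 0 := fun h0 =>
    hABT (by rw [← hA', det_mul, h0, zero_mul])
  refine ⟨T * B⁻¹, (A + T * B⁻¹)⁻¹ * (E - T), (rank_mul_le_left _ _).trans hT,
    (rank_mul_le_right _ _).trans hET, ?_, hA'det⟩
  rw [mul_add, hA', mul_nonsing_inv_cancel_left _ _ (isUnit_iff_ne_zero.2 hA'det)]
  abel

end Matrix

theorem Fin.card_subtype_le_of_val_mem_Ico {D a b : ℕ} (p : Fin D → Prop) [DecidablePred p]
    (h : ∀ i, p i → (i : ℕ) ∈ Finset.Ico a b) : Fintype.card {i // p i} ≤ b - a := by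
  rw [Fintype.card_subtype, ← Nat.card_Ico]
  exact card_le_card_of_injOn Fin.val (fun i hi => h i (by simpa using hi))
    Fin.val_injective.injOn

namespace SVD

variable {D : ℕ} {W : Matrix (Fin D) (Fin D) ℝ} (s : SVD W)

theorem rank_trunc_le (r : ℕ) : (s.trunc r).rank ≤ r :=
  (rank_mul_diagonal_mul_le _ _ _).trans <| by
    simpa using Fin.card_subtype_le_of_val_mem_Ico (a := 0) (b := r) _
      fun i (hi : (if (i : ℕ) < r then s.σ i else 0) ≠ 0) => by
        simpa using (ite_ne_right_iff.1 hi).1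

theorem diagonal_sigma_eq : diagonal (fun i : Fin D => s.σ i) = s.Uᵀ * W * s.V := by
  calc diagonal (fun i : Fin D => s.σ i)
      = s.Uᵀ * (s.U * diagonal (fun i : Fin D => s.σ i) * s.Vᵀ) * s.V := by
        rw [← Matrix.mul_assoc, ← Matrix.mul_assoc, s.hU, Matrix.one_mul, Matrix.mul_assoc,
          s.hV, Matrix.mul_one]
    _ = s.Uᵀ * W * s.V := by rw [← s.decomp]

theorem lt_rank_of_sigma_ne_zero (i : Fin D) (hi : s.σ i ≠ 0) : (i : ℕ) < W.rank := by
  have hsupp : Finset.Iic i ⊆ Finset.univ.filter fun k : Fin D => s.σ k ≠ 0 := fun k hk =>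
    Finset.mem_filter.2 ⟨Finset.mem_univ _, ne_of_gt <| lt_of_lt_of_le
      (lt_of_le_of_ne (s.nonneg _) (Ne.symm hi)) (s.anti _ _ (Finset.mem_Iic.1 hk : k ≤ i))⟩
  calc (i : ℕ) < (Finset.Iic i).card := by rw [Fin.card_Iic]; omega
    _ ≤ Fintype.card {k : Fin D // s.σ k ≠ 0} := by
      rw [Fintype.card_subtype]; exact Finset.card_le_card hsupp
    _ = (diagonal fun k : Fin D => s.σ k).rank := (rank_diagonal _).symm
    _ ≤ W.rank := by
      rw [diagonal_sigma_eq]; exact (rank_mul_le_left _ _).trans (rank_mul_le_right _ _)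

theorem sub_trunc (r : ℕ) : W - s.trunc r =
    s.U * diagonal (fun i : Fin D => if (i : ℕ) < r then 0 else s.σ i) * s.Vᵀ := by
  calc W - s.trunc r = s.U * diagonal (fun i : Fin D => s.σ i) * s.Vᵀ - s.trunc r := by
        rw [← s.decomp]
    _ = _ := by
        rw [trunc, ← Matrix.sub_mul, ← Matrix.mul_sub, diagonal_sub]
        congr 3
        funext i
        split_ifs <;> simp

theorem rank_sub_trunc_le (r : ℕ) : (W - s.trunc r).rank ≤ W.rank - r := by
  rw [sub_trunc]
  refine (rank_mul_diagonal_mul_le _ _ _).trans (Fin.card_subtype_le_of_val_mem_Ico _ ?_)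
  intro i hi
  obtain ⟨hir, hσ⟩ := ite_ne_left_iff.1 hi
  exact Finset.mem_Ico.2 ⟨not_lt.1 hir, s.lt_rank_of_sigma_ne_zero i (Ne.symm hσ)⟩

theorem exists_add_mul_add_eq {A B : Matrix (Fin D) (Fin D) ℝ} {R : ℕ} (hB : B.det ≠ 0)
    (hABT : (A * B + s.trunc R).det ≠ 0) (hW : W.rank ≤ 2 * R) :
    ∃ dA dB : Matrix (Fin D) (Fin D) ℝ, dA.rank ≤ R ∧ dB.rank ≤ R ∧
      (A + dA) * (B + dB) = A * B + W ∧ (A + dA).det ≠ 0 :=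
  Matrix.exists_add_mul_add_eq hB hABT (s.rank_trunc_le R)
    ((s.rank_sub_trunc_le R).trans (by omega))

end SVD

namespace TFNParams

variable {D H : ℕ}

theorem mul_biasMat {N : ℕ} (A : Matrix (Fin D) (Fin D) ℝ) (b : Fin D → ℝ) :
    A * biasMat N b = biasMat N (A *ᵥ b) := by
  ext i j
  simp [biasMat, Matrix.mul_apply, Matrix.mulVec, dotProduct]

variable {q pb : TFNParams D H}

theorem mul_attn_mul {l : ℕ} {M : Matrix (Fin D) (Fin D) ℝ}
    (hKQ : ∀ h ∈ Icc 1 H, Mᵀ * ((q.WK l h)ᵀ * q.WQ l h) * M = (pb.WK l h)ᵀ * pb.WQ l h)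
    (hOV : ∀ h ∈ Icc 1 H,
      q.W1 l * (q.WO l h * q.WV l h) * M = pb.W1 l * (pb.WO l h * pb.WV l h))
    {N : ℕ} (Z : Matrix (Fin D) (Fin N) ℝ) :
    q.W1 l * q.attn l (M * Z) = pb.W1 l * pb.attn l Z := by
  simp only [attn, Matrix.mul_sum]
  refine Finset.sum_congr rfl fun h hh => ?_
  have hscore : (q.WK l h * (M * Z))ᵀ * (q.WQ l h * (M * Z)) =
      (pb.WK l h * Z)ᵀ * (pb.WQ l h * Z) :=
    calc _ = Zᵀ * (Mᵀ * ((q.WK l h)ᵀ * q.WQ l h) * M) * Z := by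
          simp only [transpose_mul, Matrix.mul_assoc]
      _ = _ := by rw [hKQ h hh]; simp only [transpose_mul, Matrix.mul_assoc]
  rw [hscore]
  calc _ = q.W1 l * (q.WO l h * q.WV l h) * M *
        (Z * colSoftmax ((pb.WK l h * Z)ᵀ * (pb.WQ l h * Z))) := by
        simp only [Matrix.mul_assoc]
    _ = _ := by rw [hOV h hh]; simp only [Matrix.mul_assoc]

theorem mul_block_mul {l : ℕ} {M P P' : Matrix (Fin D) (Fin D) ℝ}
    (hKQ : ∀ h ∈ Icc 1 H, Mᵀ * ((q.WK l h)ᵀ * q.WQ l h) * M = (pb.WK l h)ᵀ * pb.WQ l h)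
    (hOV : ∀ h ∈ Icc 1 H,
      q.W1 l * (q.WO l h * q.WV l h) * M = pb.W1 l * (pb.WO l h * pb.WV l h))
    (hb1 : q.b1 l = pb.b1 l) (hW2 : P * q.W2 l = P' * pb.W2 l)
    (hb2 : P *ᵥ q.b2 l = P' *ᵥ pb.b2 l) {N : ℕ} (Z : Matrix (Fin D) (Fin N) ℝ) :
    P * q.block l (M * Z) = P' * pb.block l Z := by
  simp only [block, mul_attn_mul hKQ hOV, hb1, Matrix.mul_add, ← Matrix.mul_assoc, hW2,
    mul_biasMat, hb2]

theorem forward_eq_of_intertwine {L : ℕ} (hL : L ≠ 0) (M : ℕ → Matrix (Fin D) (Fin D) ℝ)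
    (hM : M 0 = 1)
    (hKQ : ∀ l < L, ∀ h ∈ Icc 1 H, (M l)ᵀ * ((q.WK (l + 1) h)ᵀ * q.WQ (l + 1) h) * M l =
      (pb.WK (l + 1) h)ᵀ * pb.WQ (l + 1) h)
    (hOV : ∀ l < L, ∀ h ∈ Icc 1 H, q.W1 (l + 1) * (q.WO (l + 1) h * q.WV (l + 1) h) * M l =
      pb.W1 (l + 1) * (pb.WO (l + 1) h * pb.WV (l + 1) h))
    (hb1 : q.b1 = pb.b1)
    (hW2 : ∀ l ∈ Ico 1 L, q.W2 l = M l * pb.W2 l)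
    (hb2 : ∀ l ∈ Ico 1 L, q.b2 l = M l *ᵥ pb.b2 l)
    (hWo : q.Wo * q.W2 L = pb.Wo * pb.W2 L) (hbo : q.Wo *ᵥ q.b2 L = pb.Wo *ᵥ pb.b2 L)
    {N : ℕ} (X : Matrix (Fin D) (Fin N) ℝ) : q.forward L X = pb.forward L X := by
  have hblocks : ∀ l < L, q.blocks l X = M l * pb.blocks l X := by
    intro l
    induction l with
    | zero => simp [blocks, hM]
    | succ l ih =>
      intro hl
      have hmem : l + 1 ∈ Ico 1 L := Finset.mem_Ico.2 ⟨by omega, hl⟩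
      have := mul_block_mul (P := 1) (hKQ l (by omega)) (hOV l (by omega)) (congrFun hb1 _)
        (by rw [Matrix.one_mul, hW2 _ hmem]) (by rw [one_mulVec, hb2 _ hmem]) (pb.blocks l X)
      rw [Matrix.one_mul] at this
      rw [blocks, ih (by omega), this, blocks]
  obtain ⟨L, rfl⟩ := Nat.exists_eq_succ_of_ne_zero hL
  rw [forward, forward, blocks, blocks, hblocks L (by omega),
    mul_block_mul (hKQ L (by omega)) (hOV L (by omega)) (congrFun hb1 _) hWo hbo]

end TFNParams

section Adapters

variable {D H : ℕ} {pb p : TFNParams D H} {L l h : ℕ}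

/-- The adapted network's hidden state after block `l < L` is `alignW2 pb p l` times the
target's. -/
def alignW2 (pb p : TFNParams D H) (l : ℕ) : Matrix (Fin D) (Fin D) ℝ :=
  if l = 0 then 1 else p.W2 l * (pb.W2 l)⁻¹

theorem alignW2_mul (hl : l ≠ 0) (hpb : (pb.W2 l).det ≠ 0) :
    alignW2 pb p l * pb.W2 l = p.W2 l := by
  rw [alignW2, if_neg hl, nonsing_inv_mul_cancel_right _ _ (isUnit_iff_ne_zero.2 hpb)]

theorem transpose_alignW2_mul_add_EKQ_mul (hl : l < L)
    (hp : ∀ k ∈ Icc 1 L, (p.W2 k).det ≠ 0) (hpb : ∀ k ∈ Icc 1 L, (pb.W2 k).det ≠ 0) :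
    (alignW2 pb p l)ᵀ * ((p.WK (l + 1) h)ᵀ * p.WQ (l + 1) h + EKQ pb p (l + 1) h) *
      alignW2 pb p l = (pb.WK (l + 1) h)ᵀ * pb.WQ (l + 1) h := by
  rcases eq_or_ne l 0 with rfl | hl0
  · simp [alignW2, EKQ]
  · have hmem : l ∈ Icc 1 L := Finset.mem_Icc.2 ⟨by omega, hl.le⟩
    have := (p.W2 l).invertibleOfIsUnitDet (isUnit_iff_ne_zero.2 (hp l hmem))
    have := (pb.W2 l).invertibleOfIsUnitDet (isUnit_iff_ne_zero.2 (hpb l hmem))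
    simp [alignW2, EKQ, hl0, transpose_mul, transpose_nonsing_inv, Matrix.mul_assoc]

theorem W1_mul_add_EOV_mul_alignW2 (hl : l < L)
    (hp : ∀ k ∈ Icc 1 L, (p.W1 k).det ≠ 0 ∧ (p.W2 k).det ≠ 0)
    (hpb : ∀ k ∈ Icc 1 L, (pb.W2 k).det ≠ 0) :
    p.W1 (l + 1) * (p.WO (l + 1) h * p.WV (l + 1) h + EOV pb p (l + 1) h) * alignW2 pb p l =
      pb.W1 (l + 1) * (pb.WO (l + 1) h * pb.WV (l + 1) h) := by
  have := (p.W1 (l + 1)).invertibleOfIsUnitDet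
    (isUnit_iff_ne_zero.2 (hp (l + 1) (Finset.mem_Icc.2 ⟨by omega, hl⟩)).1)
  rcases eq_or_ne l 0 with rfl | hl0
  · simp [alignW2, EOV, Matrix.mul_assoc]
  · have hmem : l ∈ Icc 1 L := Finset.mem_Icc.2 ⟨by omega, hl.le⟩
    have := (p.W2 l).invertibleOfIsUnitDet (isUnit_iff_ne_zero.2 (hp l hmem).2)
    have := (pb.W2 l).invertibleOfIsUnitDet (isUnit_iff_ne_zero.2 (hpb l hmem))
    simp [alignW2, EOV, hl0, Matrix.mul_assoc]

theorem rank_EKQ_le_Gap (hl : l < L) (hh : h ∈ Icc 1 H)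
    (hp : ∀ k ∈ Icc 1 L, (p.W2 k).det ≠ 0) :
    (EKQ pb p (l + 1) h).rank ≤ Gap L pb p (l + 1) := by
  rw [Gap, if_neg (by omega)]
  rcases eq_or_ne l 0 with rfl | hl0
  · simpa [EKQ] using (Finset.le_sup (f := fun h =>
      ((pb.WK 1 h)ᵀ * pb.WQ 1 h - (p.WK 1 h)ᵀ * p.WQ 1 h).rank) hh).trans (le_max_left _ _)
  · have := (p.W2 l).invertibleOfIsUnitDet
      (isUnit_iff_ne_zero.2 (hp l (Finset.mem_Icc.2 ⟨by omega, hl.le⟩)))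
    have hconj : EKQ pb p (l + 1) h = ((p.W2 l)ᵀ)⁻¹ *
        ((pb.W2 l)ᵀ * (pb.WK (l + 1) h)ᵀ * pb.WQ (l + 1) h * pb.W2 l -
          (p.W2 l)ᵀ * (p.WK (l + 1) h)ᵀ * p.WQ (l + 1) h * p.W2 l) * (p.W2 l)⁻¹ := by
      simp [EKQ, hl0, Matrix.mul_sub, Matrix.sub_mul, Matrix.mul_assoc]
    rw [hconj, if_neg (by omega)]
    refine (rank_mul_le_left _ _).trans ((rank_mul_le_right _ _).trans ?_)
    simpa using (Finset.le_sup (f := fun h =>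
      ((pb.W2 l)ᵀ * (pb.WK (l + 1) h)ᵀ * pb.WQ (l + 1) h * pb.W2 l -
        (p.W2 l)ᵀ * (p.WK (l + 1) h)ᵀ * p.WQ (l + 1) h * p.W2 l).rank) hh).trans
      (le_max_left _ _)

theorem rank_EOV_le_Gap (hl : l < L) (hh : h ∈ Icc 1 H)
    (hp : ∀ k ∈ Icc 1 L, (p.W1 k).det ≠ 0 ∧ (p.W2 k).det ≠ 0) :
    (EOV pb p (l + 1) h).rank ≤ Gap L pb p (l + 1) := by
  have := (p.W1 (l + 1)).invertibleOfIsUnitDet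
    (isUnit_iff_ne_zero.2 (hp (l + 1) (Finset.mem_Icc.2 ⟨by omega, hl⟩)).1)
  rw [Gap, if_neg (by omega)]
  rcases eq_or_ne l 0 with rfl | hl0
  · have hconj : EOV pb p 1 h = (p.W1 1)⁻¹ *
        (pb.W1 1 * pb.WO 1 h * pb.WV 1 h - p.W1 1 * p.WO 1 h * p.WV 1 h) := by
      simp [EOV, Matrix.mul_sub, Matrix.mul_assoc]
    rw [hconj]
    refine (rank_mul_le_right _ _).trans ?_
    simpa using (Finset.le_sup (f := fun h =>
      (pb.W1 1 * pb.WO 1 h * pb.WV 1 h - p.W1 1 * p.WO 1 h * p.WV 1 h).rank) hh).trans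
      (le_max_right _ _)
  · have := (p.W2 l).invertibleOfIsUnitDet
      (isUnit_iff_ne_zero.2 (hp l (Finset.mem_Icc.2 ⟨by omega, hl.le⟩)).2)
    have hconj : EOV pb p (l + 1) h = (p.W1 (l + 1))⁻¹ *
        (pb.W1 (l + 1) * pb.WO (l + 1) h * pb.WV (l + 1) h * pb.W2 l -
          p.W1 (l + 1) * p.WO (l + 1) h * p.WV (l + 1) h * p.W2 l) * (p.W2 l)⁻¹ := by
      simp [EOV, hl0, Matrix.mul_sub, Matrix.sub_mul, Matrix.mul_assoc]
    rw [hconj, if_neg (by omega)]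
    refine (rank_mul_le_left _ _).trans ((rank_mul_le_right _ _).trans ?_)
    simpa using (Finset.le_sup (f := fun h =>
      (pb.W1 (l + 1) * pb.WO (l + 1) h * pb.WV (l + 1) h * pb.W2 l -
        p.W1 (l + 1) * p.WO (l + 1) h * p.WV (l + 1) h * p.W2 l).rank) hh).trans
      (le_max_right _ _)

theorem exists_attn_adapters {R : ℕ} (sKQ : ∀ l h, SVD (EKQ pb p l h))
    (sOV : ∀ l h, SVD (EOV pb p l h))
    (hpA : ∀ l ∈ Icc 1 L, ∀ h ∈ Icc 1 H, (p.WO l h).det ≠ 0 ∧ (p.WV l h).det ≠ 0 ∧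
      (p.WK l h).det ≠ 0 ∧ (p.WQ l h).det ≠ 0)
    (hp : ∀ k ∈ Icc 1 L, (p.W1 k).det ≠ 0 ∧ (p.W2 k).det ≠ 0)
    (hKQ : ∀ l ∈ Icc 1 L, ∀ h ∈ Icc 1 H,
      ((p.WK l h)ᵀ * p.WQ l h + (sKQ l h).trunc R).det ≠ 0)
    (hOV : ∀ l ∈ Icc 1 L, ∀ h ∈ Icc 1 H,
      (p.WO l h * p.WV l h + (sOV l h).trunc R).det ≠ 0)
    (hGap : ∀ l < L, Gap L pb p (l + 1) ≤ 2 * R) :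
    ∃ dK dQ dO dV : ℕ → ℕ → Matrix (Fin D) (Fin D) ℝ, ∀ l < L, ∀ h ∈ Icc 1 H,
      (dK l h).rank ≤ R ∧ (dQ l h).rank ≤ R ∧ (dO l h).rank ≤ R ∧
      (dV l h).rank ≤ R ∧
      (p.WK (l + 1) h + dK l h)ᵀ * (p.WQ (l + 1) h + dQ l h) =
        (p.WK (l + 1) h)ᵀ * p.WQ (l + 1) h + EKQ pb p (l + 1) h ∧
      (p.WO (l + 1) h + dO l h) * (p.WV (l + 1) h + dV l h) =
        p.WO (l + 1) h * p.WV (l + 1) h + EOV pb p (l + 1) h := by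
  have hblock : ∀ l < L, l + 1 ∈ Icc 1 L := fun l hl => Finset.mem_Icc.2 ⟨by omega, hl⟩
  choose dKt dQ hdKQ using fun l h => exists₂_imp_of_imp_exists₂
    fun (hlh : l < L ∧ h ∈ Icc 1 H) => (sKQ (l + 1) h).exists_add_mul_add_eq
      (hpA _ (hblock l hlh.1) h hlh.2).2.2.2 (hKQ _ (hblock l hlh.1) h hlh.2)
      ((rank_EKQ_le_Gap hlh.1 hlh.2 fun k hk => (hp k hk).2).trans (hGap l hlh.1))
  choose dO dV hdOV using fun l h => exists₂_imp_of_imp_exists₂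
    fun (hlh : l < L ∧ h ∈ Icc 1 H) => (sOV (l + 1) h).exists_add_mul_add_eq
      (hpA _ (hblock l hlh.1) h hlh.2).2.1 (hOV _ (hblock l hlh.1) h hlh.2)
      ((rank_EOV_le_Gap hlh.1 hlh.2 hp).trans (hGap l hlh.1))
  refine ⟨fun l h => (dKt l h)ᵀ, dQ, dO, dV, fun l hl h hh => ?_⟩
  obtain ⟨hK, hQ, hKQeq, -⟩ := hdKQ l h ⟨hl, hh⟩
  obtain ⟨hO, hV, hOVeq, -⟩ := hdOV l h ⟨hl, hh⟩
  refine ⟨(rank_transpose _).trans_le hK, hQ, hO, hV, ?_, hOVeq⟩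
  rwa [transpose_add, transpose_transpose]

end Adapters

theorem lora_tfn_multihead_exact_general (D L H : ℕ)
    (hL : 1 ≤ L)
    (pb p : TFNParams D H)
    (R : ℕ) (hR1 : 1 ≤ R)
    (hNSb : AllWeightsNS L pb) (hNSf : AllWeightsNS L p)
    (sKQ : ∀ l h, SVD (EKQ pb p l h))
    (sOV : ∀ l h, SVD (EOV pb p l h))
    (sO : SVD (EO pb p L))
    (hKQ : ∀ l ∈ Finset.Icc 1 L, ∀ h ∈ Finset.Icc 1 H, ∀ r ∈ Finset.Icc 1 R,
      ((p.WK l h)ᵀ * p.WQ l h + (sKQ l h).trunc r).det ≠ 0)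
    (hOV : ∀ l ∈ Finset.Icc 1 L, ∀ h ∈ Finset.Icc 1 H, ∀ r ∈ Finset.Icc 1 R,
      (p.WO l h * p.WV l h + (sOV l h).trunc r).det ≠ 0)
    (hO : ∀ r ∈ Finset.Icc 1 R, (p.Wo * p.W2 L + sO.trunc r).det ≠ 0)
    (hR : ∀ i ∈ Finset.Icc 1 (L + 1), (Gap L pb p i + 1) / 2 ≤ R) :
    ∃ (dWK dWQ dWV dWO : ℕ → ℕ → Matrix (Fin D) (Fin D) ℝ)
      (dW2L dWo : Matrix (Fin D) (Fin D) ℝ)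
      (b1h b2h : ℕ → Fin D → ℝ),
      (∀ l ∈ Finset.Icc 1 L, ∀ h ∈ Finset.Icc 1 H,
        (dWK l h).rank ≤ R ∧ (dWQ l h).rank ≤ R ∧ (dWV l h).rank ≤ R ∧
          (dWO l h).rank ≤ R) ∧
      dW2L.rank ≤ R ∧ dWo.rank ≤ R ∧
      ∀ N : ℕ, 1 ≤ N → ∀ X : Matrix (Fin D) (Fin N) ℝ,
        TFNParams.forward (H := H)
          { WO := fun l h => p.WO l h + dWO l h
            WV := fun l h => p.WV l h + dWV l h
            WK := fun l h => p.WK l h + dWK l h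
            WQ := fun l h => p.WQ l h + dWQ l h
            W1 := p.W1
            W2 := fun l => if l = L then p.W2 L + dW2L else p.W2 l
            b1 := b1h
            b2 := b2h
            Wo := p.Wo + dWo } L X = pb.forward L X := by
  obtain ⟨-, hpb, -⟩ := hNSb
  obtain ⟨hpA, hp, -⟩ := hNSf
  have hpb2 : ∀ l ∈ Icc 1 L, (pb.W2 l).det ≠ 0 := fun l hl => (hpb l hl).2
  have hp2 : ∀ l ∈ Icc 1 L, (p.W2 l).det ≠ 0 := fun l hl => (hp l hl).2
  have hRR : R ∈ Icc 1 R := Finset.mem_Icc.2 ⟨hR1, le_rfl⟩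
  have hGap : ∀ i ∈ Icc 1 (L + 1), Gap L pb p i ≤ 2 * R := fun i hi => by
    have := hR i hi
    omega
  obtain ⟨dK, dQ, dO, dV, hd⟩ := exists_attn_adapters sKQ sOV hpA hp
    (fun l hl h hh => hKQ l hl h hh R hRR) (fun l hl h hh => hOV l hl h hh R hRR)
    fun l hl => hGap _ (Finset.mem_Icc.2 ⟨by omega, by omega⟩)
  obtain ⟨dWo, dW2L, hdWo, hdW2L, hout, hWo⟩ := sO.exists_add_mul_add_eq
    (hp2 L (Finset.mem_Icc.2 ⟨hL, le_rfl⟩)) (hO R hRR)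
    (by simpa [Gap, EO] using hGap (L + 1) (Finset.mem_Icc.2 ⟨by omega, le_rfl⟩))
  refine ⟨fun l h => dK (l - 1) h, fun l h => dQ (l - 1) h, fun l h => dV (l - 1) h,
    fun l h => dO (l - 1) h, dW2L, dWo, pb.b1,
    fun l => if l = L then (p.Wo + dWo)⁻¹ *ᵥ (pb.Wo *ᵥ pb.b2 L)
      else alignW2 pb p l *ᵥ pb.b2 l,
    fun l hl h hh => ?_, hdW2L, hdWo, fun N _ X => ?_⟩
  · obtain ⟨hK, hQ, hO, hV, -⟩ := hd (l - 1) (by have := Finset.mem_Icc.1 hl; omega) h hh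
    exact ⟨hK, hQ, hV, hO⟩
  refine TFNParams.forward_eq_of_intertwine (Nat.pos_iff_ne_zero.1 hL) (alignW2 pb p) (if_pos rfl)
    (fun l hl h hh => ?_) (fun l hl h hh => ?_) ?_ (fun l hl => ?_) (fun l hl => ?_) ?_ ?_ X
  · simp only [add_tsub_cancel_right, (hd l hl h hh).2.2.2.2.1]
    exact transpose_alignW2_mul_add_EKQ_mul hl hp2 hpb2
  · simp only [add_tsub_cancel_right, (hd l hl h hh).2.2.2.2.2]
    exact W1_mul_add_EOV_mul_alignW2 hl hp hpb2
  · rfl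
  · obtain ⟨hl1, hlL⟩ := Finset.mem_Ico.1 hl
    simp [hlL.ne, alignW2_mul (by omega : l ≠ 0) (hpb2 l (Finset.mem_Icc.2 ⟨hl1, hlL.le⟩))]
  · simp [(Finset.mem_Ico.1 hl).2.ne]
  · simp [hout, EO]
  · simp [mulVec_mulVec, mul_nonsing_inv_cancel_left _ _ (isUnit_iff_ne_zero.2 hWo)]

/-- **Exact adaptation of multi-head Transformer networks via LoRA
(Theorem 5).**  Under the non-singularity Assumption 3, if
`R ≥ max_{i∈{1,…,L+1}} ⌈G_i/2⌉` then there are rank-`≤ R` adapters for all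
attention weights, for `W_{2L}` and for `W_o` (all other adapters zero), and
updated biases, such that the adapted model equals the target model on every
input `X ∈ ℝ^{D×N}` for every sequence length `N ≥ 1`. -/
theorem lora_tfn_multihead_exact (D L H : ℕ)
    (hD : 1 ≤ D) (hL : 1 ≤ L) (hH : 1 ≤ H)
    (pb p : TFNParams D H)
    (R : ℕ) (hR1 : 1 ≤ R) (hRD : R ≤ D)
    (hNSb : AllWeightsNS L pb) (hNSf : AllWeightsNS L p)
    (sKQ : ∀ l h, SVD (EKQ pb p l h))
    (sOV : ∀ l h, SVD (EOV pb p l h))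
    (sO : SVD (EO pb p L))
    (hKQ : ∀ l ∈ Finset.Icc 1 L, ∀ h ∈ Finset.Icc 1 H, ∀ r ∈ Finset.Icc 1 R,
      ((p.WK l h)ᵀ * p.WQ l h + (sKQ l h).trunc r).det ≠ 0)
    (hOV : ∀ l ∈ Finset.Icc 1 L, ∀ h ∈ Finset.Icc 1 H, ∀ r ∈ Finset.Icc 1 R,
      (p.WO l h * p.WV l h + (sOV l h).trunc r).det ≠ 0)
    (hO : ∀ r ∈ Finset.Icc 1 R, (p.Wo * p.W2 L + sO.trunc r).det ≠ 0)
    (hR : ∀ i ∈ Finset.Icc 1 (L + 1), (Gap L pb p i + 1) / 2 ≤ R) :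
    ∃ (dWK dWQ dWV dWO : ℕ → ℕ → Matrix (Fin D) (Fin D) ℝ)
      (dW2L dWo : Matrix (Fin D) (Fin D) ℝ)
      (b1h b2h : ℕ → Fin D → ℝ),
      (∀ l ∈ Finset.Icc 1 L, ∀ h ∈ Finset.Icc 1 H,
        (dWK l h).rank ≤ R ∧ (dWQ l h).rank ≤ R ∧ (dWV l h).rank ≤ R ∧
          (dWO l h).rank ≤ R) ∧
      dW2L.rank ≤ R ∧ dWo.rank ≤ R ∧
      ∀ N : ℕ, 1 ≤ N → ∀ X : Matrix (Fin D) (Fin N) ℝ,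
        TFNParams.forward (H := H)
          { WO := fun l h => p.WO l h + dWO l h
            WV := fun l h => p.WV l h + dWV l h
            WK := fun l h => p.WK l h + dWK l h
            WQ := fun l h => p.WQ l h + dWQ l h
            W1 := p.W1
            W2 := fun l => if l = L then p.W2 L + dW2L else p.W2 l
            b1 := b1h
            b2 := b2h
            Wo := p.Wo + dWo } L X = pb.forward L X :=
  lora_tfn_multihead_exact_general D L H hL pb p R hR1 hNSb hNSf sKQ sOV sO hKQ hOV hO hR

end
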